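/- Let A be a set of n ≥ 3 agents with an irreflexive preference relation P, seated on the cycle C_n by an assignment π constructed as follows from three pairwise distinct agents s, t, w with s → w, t → w, s ↛ t, t ↛ s: set π(s) = v_1, π(w) = v_2, π(t) = v_3, and for i = 4, …, n assign to v_i an as-yet-unassigned agent that approves the agent at v_{i−1} whenever such an agent exists, and otherwise an arbitrary unassigned agent. Then for every index i with 4 ≤ i ≤ n−1, either the agent at v_i approves the agent at v_{i−1}, or the agent at v_{i+1} does not approve the agent at v_{i−1}; consequently the agents at v_i and v_{i+1} do not form a blocking pair. -/
import Mathlib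


/-- The utility of agent `i` under assignment `π`: the number of seats adjacent to
`i`'s seat whose occupant `i` approves. -/
noncomputable def utility {A V : Type*} (G : SimpleGraph V) (P : A → A → Prop)
    (π : A ≃ V) (i : A) : ℕ :=
  Set.ncard {v : V | G.Adj (π i) v ∧ P i (π.symm v)}

/-- Agent `i` envies agent `j` under `π` if `i`'s utility strictly increases after the
two exchange seats. -/
noncomputable def envies {A V : Type*} [DecidableEq A] (G : SimpleGraph V) (P : A → A → Prop)
    (π : A ≃ V) (i j : A) : Prop :=
  utility G P π i < utility G P ((Equiv.swap i j).trans π) i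

/-- Agents `i` and `j` form a blocking pair under `π` if each envies the other. -/
noncomputable def blockingPair {A V : Type*} [DecidableEq A] (G : SimpleGraph V) (P : A → A → Prop)
    (π : A ≃ V) (i j : A) : Prop :=
  envies G P π i j ∧ envies G P π j i

/-- An assignment is neighborhood stable if no blocking pair occupies adjacent seats. -/
noncomputable def NeighborhoodStable {A V : Type*} [DecidableEq A] (G : SimpleGraph V) (P : A → A → Prop)
    (π : A ≃ V) : Prop :=
  ∀ i j : A, blockingPair G P π i j → ¬ G.Adj (π i) (π j)

/-- The cycle seat graph `C_n` on vertices `ZMod n`, with `v` adjacent to `v + 1`. -/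
def cycleSeatGraph (n : ℕ) : SimpleGraph (ZMod n) :=
  SimpleGraph.fromRel (fun i j => j = i + 1)

lemma zmod_one_ne_zero {n : ℕ} (hn : 3 ≤ n) : (1 : ZMod n) ≠ 0 := by
  haveI : NeZero n := ⟨by omega⟩
  have : ((1:ℕ) : ZMod n) ≠ 0 := by
    rw [Ne, ZMod.natCast_eq_zero_iff]
    intro h; exact absurd (Nat.le_of_dvd (by norm_num) h) (by omega)
  simpa using this

lemma zmod_two_ne_zero {n : ℕ} (hn : 3 ≤ n) : (2 : ZMod n) ≠ 0 := by
  haveI : NeZero n := ⟨by omega⟩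
  have : ((2:ℕ) : ZMod n) ≠ 0 := by
    rw [Ne, ZMod.natCast_eq_zero_iff]
    intro h; exact absurd (Nat.le_of_dvd (by norm_num) h) (by omega)
  simpa using this

lemma cycle_adj {n : ℕ} (hn : 3 ≤ n) (u v : ZMod n) :
    (cycleSeatGraph n).Adj u v ↔ v = u + 1 ∨ v = u - 1 := by
  unfold cycleSeatGraph
  rw [SimpleGraph.fromRel_adj]
  constructor
  · rintro ⟨hne, h | h⟩
    · exact Or.inl h
    · right; rw [h]; ring
  · rintro (rfl | rfl)
    · exact ⟨fun he => zmod_one_ne_zero hn (left_eq_add.mp he), Or.inl rfl⟩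
    · exact ⟨fun he => zmod_one_ne_zero hn (sub_eq_self.mp he.symm), Or.inr (by ring)⟩

open Classical in
lemma util_cycle {A : Type*} {n : ℕ} (hn : 3 ≤ n) (P : A → A → Prop) (π : A ≃ ZMod n) (a : A) :
    utility (cycleSeatGraph n) P π a =
      (if P a (π.symm (π a + 1)) then 1 else 0) +
      (if P a (π.symm (π a - 1)) then 1 else 0) := by
  classical
  have hne : (π a + 1) ≠ (π a - 1) := by
    intro h
    apply zmod_two_ne_zero hn
    calc (2:ZMod n) = π a + 1 - (π a - 1) := by ring
    _ = 0 := by rw [h]; ring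
  unfold utility
  have hset : {v : ZMod n | (cycleSeatGraph n).Adj (π a) v ∧ P a (π.symm v)} =
      {v : ZMod n | (v = π a + 1 ∨ v = π a - 1) ∧ P a (π.symm v)} := by
    ext v; rw [Set.mem_setOf_eq, Set.mem_setOf_eq, cycle_adj hn]
  rw [hset]
  by_cases h₁ : P a (π.symm (π a + 1)) <;> by_cases h₂ : P a (π.symm (π a - 1))
  · rw [show {v : ZMod n | (v = π a + 1 ∨ v = π a - 1) ∧ P a (π.symm v)} = {π a + 1, π a - 1} from by
      ext v
      simp only [Set.mem_setOf_eq, Set.mem_insert_iff, Set.mem_singleton_iff]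
      constructor
      · exact fun h => h.1
      · rintro (rfl | rfl)
        · exact ⟨Or.inl rfl, h₁⟩
        · exact ⟨Or.inr rfl, h₂⟩]
    rw [Set.ncard_pair hne]
    simp [h₁, h₂]
  · rw [show {v : ZMod n | (v = π a + 1 ∨ v = π a - 1) ∧ P a (π.symm v)} = {π a + 1} from by
      ext v
      simp only [Set.mem_setOf_eq, Set.mem_singleton_iff]
      constructor
      · rintro ⟨rfl | rfl, hp⟩
        · rfl
        · exact absurd hp h₂
      · rintro rfl; exact ⟨Or.inl rfl, h₁⟩]
    rw [Set.ncard_singleton]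
    simp [h₁, h₂]
  · rw [show {v : ZMod n | (v = π a + 1 ∨ v = π a - 1) ∧ P a (π.symm v)} = {π a - 1} from by
      ext v
      simp only [Set.mem_setOf_eq, Set.mem_singleton_iff]
      constructor
      · rintro ⟨rfl | rfl, hp⟩
        · exact absurd hp h₁
        · rfl
      · rintro rfl; exact ⟨Or.inr rfl, h₂⟩]
    rw [Set.ncard_singleton]
    simp [h₁, h₂]
  · rw [show {v : ZMod n | (v = π a + 1 ∨ v = π a - 1) ∧ P a (π.symm v)} = ∅ from by
      ext v
      simp only [Set.mem_setOf_eq, Set.mem_empty_iff_false, iff_false, not_and]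
      rintro (rfl | rfl) <;> assumption]
    rw [Set.ncard_empty]
    simp [h₁, h₂]

/-- For the Case 1 greedy assignment on the cycle `C_n` (with
`π s = v_1, π w = v_2, π t = v_3` and each later seat `v_i` filled greedily by an
unassigned agent approving the agent at `v_{i-1}` whenever possible), for every
`4 ≤ i ≤ n - 1` either the agent at `v_i` approves the agent at `v_{i-1}`, or the agent
at `v_{i+1}` does not approve the agent at `v_{i-1}`; consequently the agents at `v_i`
and `v_{i+1}` do not form a blocking pair. -/
theorem stmt13 {A : Type*} [Fintype A] [DecidableEq A] {n : ℕ} (hn : 3 ≤ n)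
    (hcard : Fintype.card A = n) (P : A → A → Prop) (hP : Irreflexive P)
    (s t w : A) (hst : s ≠ t) (hsw : s ≠ w) (htw : t ≠ w)
    (h1 : P s w) (h2 : P t w) (h3 : ¬ P s t) (h4 : ¬ P t s)
    (π : A ≃ ZMod n) (hπs : π s = 1) (hπw : π w = 2) (hπt : π t = 3)
    (hgreedy : ∀ i : ℕ, 4 ≤ i → i ≤ n →
      (∃ l : A, (∃ m : ℕ, i ≤ m ∧ m ≤ n ∧ π l = (m : ZMod n)) ∧
        P l (π.symm ((i - 1 : ℕ) : ZMod n))) →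
      P (π.symm ((i : ℕ) : ZMod n)) (π.symm ((i - 1 : ℕ) : ZMod n))) :
    ∀ i : ℕ, 4 ≤ i → i ≤ n - 1 →
      (P (π.symm ((i : ℕ) : ZMod n)) (π.symm ((i - 1 : ℕ) : ZMod n)) ∨
        ¬ P (π.symm ((i + 1 : ℕ) : ZMod n)) (π.symm ((i - 1 : ℕ) : ZMod n))) ∧
      ¬ blockingPair (cycleSeatGraph n) P π
          (π.symm ((i : ℕ) : ZMod n)) (π.symm ((i + 1 : ℕ) : ZMod n)) := by
  classical
  intro i hi4 hin
  have hn5 : 5 ≤ n := by omega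
  have h1ne : (1 : ZMod n) ≠ 0 := zmod_one_ne_zero hn
  have h2ne : (2 : ZMod n) ≠ 0 := zmod_two_ne_zero hn
  have hcast1 : ((i - 1 : ℕ) : ZMod n) = (i : ZMod n) - 1 := by
    rw [Nat.cast_sub (by omega)]; simp
  have hcast2 : ((i + 1 : ℕ) : ZMod n) = (i : ZMod n) + 1 := by push_cast; ring
  rw [hcast1, hcast2]
  set u : ZMod n := (i : ZMod n) with hu
  -- distinctness of agents
  have hba : π.symm (u + 1) ≠ π.symm u := by
    intro h
    have h0 := sub_eq_zero.mpr (π.symm.injective h)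
    exact h1ne (by calc (1:ZMod n) = u + 1 - u := by ring
                  _ = 0 := h0)
  have hda : π.symm (u + 2) ≠ π.symm u := by
    intro h
    have h0 := sub_eq_zero.mpr (π.symm.injective h)
    exact h2ne (by calc (2:ZMod n) = u + 2 - u := by ring
                  _ = 0 := h0)
  have hdb : π.symm (u + 2) ≠ π.symm (u + 1) := by
    intro h
    have h0 := sub_eq_zero.mpr (π.symm.injective h)
    exact h1ne (by calc (1:ZMod n) = u + 2 - (u + 1) := by ring
                  _ = 0 := h0)
  have hca : π.symm (u - 1) ≠ π.symm u := by
    intro h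
    have h0 := sub_eq_zero.mpr (π.symm.injective h)
    exact h1ne (by calc (1:ZMod n) = -(u - 1 - u) := by ring
                  _ = 0 := by rw [h0]; ring)
  have hcb : π.symm (u - 1) ≠ π.symm (u + 1) := by
    intro h
    have := sub_eq_zero.mpr (π.symm.injective h)
    apply h2ne
    calc (2 : ZMod n) = -(u - 1 - (u + 1)) := by ring
    _ = 0 := by rw [this]; ring
  -- part 1
  have hone : P (π.symm u) (π.symm (u - 1)) ∨ ¬ P (π.symm (u + 1)) (π.symm (u - 1)) := by
    by_contra hcon
    push_neg at hcon
    obtain ⟨hac, hbc⟩ := hcon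
    refine hac ?_
    have := hgreedy i hi4 (by omega)
      ⟨π.symm (u + 1), ⟨i + 1, by omega, by omega, by rw [hcast2, Equiv.apply_symm_apply]⟩,
        by rw [hcast1]; exact hbc⟩
    rwa [hcast1] at this
  refine ⟨hone, ?_⟩
  -- utilities
  set a := π.symm u with ha
  set b := π.symm (u + 1) with hb
  set c := π.symm (u - 1) with hc
  set d := π.symm (u + 2) with hd
  have hπa : π a = u := π.apply_symm_apply u
  have hπb : π b = u + 1 := π.apply_symm_apply _
  have hswap : ∀ v : ZMod n, ((Equiv.swap a b).trans π).symm v = Equiv.swap a b (π.symm v) := by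
    intro v
    simp [Equiv.symm_trans_apply]
  have hswap' : ∀ v : ZMod n, ((Equiv.swap b a).trans π).symm v = Equiv.swap a b (π.symm v) := by
    intro v
    simp [Equiv.symm_trans_apply, Equiv.swap_comm b a]
  have Ha : utility (cycleSeatGraph n) P π a =
      (if P a b then 1 else 0) + (if P a c then 1 else 0) := by
    rw [util_cycle hn, hπa, ← hb, ← hc]
  have Hb : utility (cycleSeatGraph n) P π b =
      (if P b d then 1 else 0) + (if P b a then 1 else 0) := by
    rw [util_cycle hn, hπb, show u + 1 + 1 = u + 2 from by ring,
      show u + 1 - 1 = u from by ring, ← hd, ← ha]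
  have Ha' : utility (cycleSeatGraph n) P ((Equiv.swap a b).trans π) a =
      (if P a d then 1 else 0) + (if P a b then 1 else 0) := by
    rw [util_cycle hn]
    have e1 : ((Equiv.swap a b).trans π) a = u + 1 := by
      simp [Equiv.trans_apply, Equiv.swap_apply_left, hπb]
    rw [e1, show u + 1 + 1 = u + 2 from by ring, show u + 1 - 1 = u from by ring,
      hswap, hswap, ← hd, ← ha, Equiv.swap_apply_of_ne_of_ne hda hdb,
      Equiv.swap_apply_left]
  have Hb' : utility (cycleSeatGraph n) P ((Equiv.swap b a).trans π) b =
      (if P b a then 1 else 0) + (if P b c then 1 else 0) := by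
    rw [util_cycle hn]
    have e1 : ((Equiv.swap b a).trans π) b = u := by
      simp [Equiv.trans_apply, Equiv.swap_apply_left, hπa]
    rw [e1, hswap', hswap', ← hb, ← hc, Equiv.swap_apply_right,
      Equiv.swap_apply_of_ne_of_ne hca hcb]
  rintro ⟨hab, hba'⟩
  rw [envies, Ha, Ha'] at hab
  rw [envies, Hb, Hb'] at hba'
  rcases hone with h | h
  · rw [if_pos h] at hab
    split_ifs at hab <;> omega
  · rw [if_neg h] at hba'
    split_ifs at hba' <;> omega
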